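/- arXiv:1711.05587 — 5 statements merged into one kernel-verified Lean document; each statement's English description precedes it below -/
import Mathlib

section
/- For every s > 2 there exists a constant C_s > 0 such that for all A ∈ ℝ³ and all r > 0, ∫_{S²} ⟨A + rσ⟩^{−s} dσ ≤ C_s ⟨|A| − r⟩^{2−s} ⟨r⟩^{−2}, where the integral is with respect to the surface measure on the unit sphere S² ⊂ ℝ³. -/
/-!
Write `a = ‖A‖` and `p = -A / a`. For `σ` on the unit sphere,
`‖A + r σ‖² = (a - r)² + a r ‖σ - p‖²`, so the integrand is at most `⟨a - r⟩^{-s}`, and it exceeds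
`t` only on the cap around `p` of radius `√(t^{-2/s} / (a r))`, whose area is `O(t^{-2/s} / (a r))`.
Since `2 / s < 1`, the layer-cake formula turns this into the bound `O(⟨a - r⟩^{2-s} / (a r))`;
the sup bound gives `O(⟨a - r⟩^{-s})`. As `⟨a - r⟩² + a r ≥ 3 ⟨r⟩² / 4`, one of the two is always
`O(⟨a - r⟩^{2-s} ⟨r⟩^{-2})`. Small caps are images of planar squares under a Lipschitz graph map,
which bounds their area by a multiple of the squared radius.
-/

open MeasureTheory Metric Set Module
open scoped InnerProductSpace

theorem abs_sqrt_sub_sqrt_le {u v : ℝ} (hu : 1 / 4 ≤ u) (hv : 1 / 4 ≤ v) :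
    |√u - √v| ≤ |u - v| := by
  have hsu : 1 / 2 ≤ √u := Real.le_sqrt_of_sq_le (by linarith)
  have hsv : 1 / 2 ≤ √v := Real.le_sqrt_of_sq_le (by linarith)
  have hdiff : u - v = (√u - √v) * (√u + √v) := by
    calc u - v = √u ^ 2 - √v ^ 2 := by rw [Real.sq_sqrt (by linarith), Real.sq_sqrt (by linarith)]
      _ = (√u - √v) * (√u + √v) := by ring
  rw [hdiff, abs_mul, abs_of_pos (by linarith : 0 < √u + √v)]
  exact le_mul_of_one_le_right (abs_nonneg _) (by linarith)

section InnerProductSpace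

variable {E : Type*} [NormedAddCommGroup E] [InnerProductSpace ℝ E]

theorem norm_add_smul_sq_eq (A : E) {σ : E} (hσ : ‖σ‖ = 1) (r : ℝ) :
    ‖A + r • σ‖ ^ 2 = (‖A‖ - r) ^ 2 + ‖A‖ * r * ‖σ + ‖A‖⁻¹ • A‖ ^ 2 := by
  rcases eq_or_ne A 0 with rfl | hA
  · simp [norm_smul, hσ]
  have ha : ‖A‖ ≠ 0 := norm_ne_zero_iff.2 hA
  rw [norm_add_sq_real, norm_add_sq_real, norm_smul, norm_smul, real_inner_smul_right,
    real_inner_smul_right, real_inner_comm, hσ, Real.norm_eq_abs, Real.norm_eq_abs,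
    abs_inv, abs_norm, mul_one, sq_abs]
  field_simp
  ring

theorem norm_sub_sq_eq_two_sub_inner {x y : E} (hx : ‖x‖ = 1) (hy : ‖y‖ = 1) :
    ‖x - y‖ ^ 2 = 2 - 2 * ⟪x, y⟫_ℝ := by
  rw [norm_sub_sq_real, hx, hy]; ring

theorem exists_orthonormalBasis_apply_eq [FiniteDimensional ℝ E] {ι : Type*} [Fintype ι]
    (hcard : finrank ℝ E = Fintype.card ι) (i : ι) {p : E} (hp : ‖p‖ = 1) :
    ∃ b : OrthonormalBasis ι ℝ E, b i = p := by
  have hv : Orthonormal ℝ (Set.domRestrict {i} fun _ : ι => p) :=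
    ⟨fun _ => hp, fun j k hjk => absurd (Subtype.ext (j.2.out.trans k.2.out.symm)) hjk⟩
  obtain ⟨b, hb⟩ := hv.exists_orthonormalBasis_extension_of_card_eq hcard
  exact ⟨b, hb i rfl⟩

noncomputable def sphereChart (b : Fin 3 → E) (y : Fin 2 → ℝ) : E :=
  y 0 • b 0 + y 1 • b 1 + √(1 - (y 0 ^ 2 + y 1 ^ 2)) • b 2

theorem lipschitzOnWith_sqrt_one_sub_sq :
    LipschitzOnWith 4 (fun y : Fin 2 → ℝ => √(1 - (y 0 ^ 2 + y 1 ^ 2)))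
      {y | y 0 ^ 2 + y 1 ^ 2 ≤ 3 / 4} := by
  refine LipschitzOnWith.of_dist_le_mul fun x hx y hy => ?_
  replace hx : x 0 ^ 2 + x 1 ^ 2 ≤ 3 / 4 := hx
  replace hy : y 0 ^ 2 + y 1 ^ 2 ≤ 3 / 4 := hy
  have hd (i : Fin 2) : |x i - y i| ≤ dist x y := by
    simpa only [Real.dist_eq] using dist_le_pi_dist x y i
  have hbound (z : Fin 2 → ℝ) (hz : z 0 ^ 2 + z 1 ^ 2 ≤ 3 / 4) (i : Fin 2) : |z i| ≤ 1 := by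
    rw [← sq_le_one_iff_abs_le_one]
    fin_cases i <;> dsimp <;> nlinarith [sq_nonneg (z 0), sq_nonneg (z 1)]
  have hsum (i : Fin 2) : |x i + y i| ≤ 2 :=
    (abs_add_le _ _).trans (by linarith [hbound x hx i, hbound y hy i])
  rw [Real.dist_eq]
  refine (abs_sqrt_sub_sqrt_le (by linarith) (by linarith)).trans ?_
  calc |1 - (x 0 ^ 2 + x 1 ^ 2) - (1 - (y 0 ^ 2 + y 1 ^ 2))|
      = |(x 0 - y 0) * (x 0 + y 0) + (x 1 - y 1) * (x 1 + y 1)| := by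
        rw [← abs_neg]; ring_nf
    _ ≤ |x 0 - y 0| * |x 0 + y 0| + |x 1 - y 1| * |x 1 + y 1| := by
        rw [← abs_mul, ← abs_mul]; exact abs_add_le _ _
    _ ≤ dist x y * 2 + dist x y * 2 := by
        gcongr
        exacts [hd 0, hsum 0, hd 1, hsum 1]
    _ = (4 : NNReal) * dist x y := by push_cast; ring

theorem lipschitzOnWith_sphereChart {b : Fin 3 → E} (hb : ∀ i, ‖b i‖ = 1) :
    LipschitzOnWith 6 (sphereChart b) {y | y 0 ^ 2 + y 1 ^ 2 ≤ 3 / 4} := by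
  refine LipschitzOnWith.of_dist_le_mul fun x hx y hy => ?_
  have hd (i : Fin 2) : |x i - y i| ≤ dist x y := by
    simpa only [Real.dist_eq] using dist_le_pi_dist x y i
  have hheight := lipschitzOnWith_sqrt_one_sub_sq.dist_le_mul x hx y hy
  rw [Real.dist_eq] at hheight
  calc dist (sphereChart b x) (sphereChart b y)
      = ‖(x 0 - y 0) • b 0 + (x 1 - y 1) • b 1
          + (√(1 - (x 0 ^ 2 + x 1 ^ 2)) - √(1 - (y 0 ^ 2 + y 1 ^ 2))) • b 2‖ := by
        rw [dist_eq_norm, sphereChart, sphereChart]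
        congr 1
        simp only [sub_smul]
        abel
    _ ≤ |x 0 - y 0| + |x 1 - y 1|
          + |√(1 - (x 0 ^ 2 + x 1 ^ 2)) - √(1 - (y 0 ^ 2 + y 1 ^ 2))| := by
        refine norm_add₃_le.trans ?_
        simp only [norm_smul, hb, mul_one, Real.norm_eq_abs, le_refl]
    _ ≤ (6 : NNReal) * dist x y := by
        push_cast at hheight ⊢
        linarith [hd 0, hd 1]

theorem sphere_inter_closedBall_subset_image_sphereChart (b : OrthonormalBasis (Fin 3) ℝ E)
    {ρ : ℝ} (hρ : ρ ≤ 1) :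
    sphere (0 : E) 1 ∩ closedBall (b 2) ρ ⊆
      sphereChart b '' ({y | y 0 ^ 2 + y 1 ^ 2 ≤ 3 / 4} ∩ closedBall 0 ρ) := by
  rintro σ ⟨hσ, hσρ⟩
  rw [mem_sphere_zero_iff_norm] at hσ
  rw [mem_closedBall, dist_eq_norm] at hσρ
  set c : Fin 3 → ℝ := fun i => ⟪σ, b i⟫_ℝ with hc
  have hsum : c 0 ^ 2 + c 1 ^ 2 + c 2 ^ 2 = 1 := by
    have h := b.sum_inner_mul_inner σ σ
    simp only [Fin.sum_univ_three, real_inner_comm σ, real_inner_self_eq_norm_sq, hσ] at h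
    simp only [hc]
    linear_combination h
  have hdist : 2 - 2 * c 2 ≤ ρ ^ 2 := by
    simp only [hc]
    rw [← norm_sub_sq_eq_two_sub_inner hσ (b.orthonormal.1 2)]
    exact pow_le_pow_left₀ (norm_nonneg _) hσρ 2
  have hρ0 : 0 ≤ ρ := (norm_nonneg _).trans hσρ
  have hc2 : 1 / 2 ≤ c 2 := by nlinarith
  have hplane : c 0 ^ 2 + c 1 ^ 2 ≤ ρ ^ 2 := by nlinarith
  refine ⟨![c 0, c 1], ⟨show c 0 ^ 2 + c 1 ^ 2 ≤ 3 / 4 by nlinarith, ?_⟩, ?_⟩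
  · have h0 : |c 0| ≤ ρ := abs_le_of_sq_le_sq (by nlinarith) hρ0
    have h1 : |c 1| ≤ ρ := abs_le_of_sq_le_sq (by nlinarith) hρ0
    rw [mem_closedBall_zero_iff, pi_norm_le_iff_of_nonneg hρ0]
    intro i
    fin_cases i
    exacts [h0, h1]
  · have hsqrt : √(1 - (c 0 ^ 2 + c 1 ^ 2)) = c 2 := by
      rw [show 1 - (c 0 ^ 2 + c 1 ^ 2) = c 2 ^ 2 by linarith, Real.sqrt_sq (by linarith)]
    have h := b.sum_repr' σ
    simp only [Fin.sum_univ_three, real_inner_comm σ] at h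
    rw [sphereChart]
    simp only [Matrix.cons_val_zero, Matrix.cons_val_one, hsqrt]
    exact h

end InnerProductSpace

section SphereMeasure

variable {E : Type*} [NormedAddCommGroup E] [InnerProductSpace ℝ E] [MeasurableSpace E]
  [BorelSpace E]

theorem hausdorffMeasure_sphere_inter_closedBall_le_of_le_one (hE : finrank ℝ E = 3) {p : E}
    (hp : ‖p‖ = 1) {ρ : ℝ} (hρ0 : 0 ≤ ρ) (hρ1 : ρ ≤ 1) :
    μH[2] (sphere (0 : E) 1 ∩ closedBall p ρ) ≤ ENNReal.ofReal (144 * ρ ^ 2) := by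
  have := Module.finite_of_finrank_eq_succ hE
  obtain ⟨b, rfl⟩ := exists_orthonormalBasis_apply_eq (by simpa using hE) (2 : Fin 3) hp
  have hμ : (μH[2] : Measure (Fin 2 → ℝ)) = volume := by
    simpa using hausdorffMeasure_pi_real (ι := Fin 2)
  have hchart := (lipschitzOnWith_sphereChart fun i => b.orthonormal.1 i).mono
    (inter_subset_left (t := closedBall 0 ρ))
  calc μH[2] (sphere (0 : E) 1 ∩ closedBall (b 2) ρ)
      ≤ μH[2] (sphereChart b '' ({y | y 0 ^ 2 + y 1 ^ 2 ≤ 3 / 4} ∩ closedBall 0 ρ)) :=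
        measure_mono (sphere_inter_closedBall_subset_image_sphereChart b hρ1)
    _ ≤ (6 : ENNReal) ^ (2 : ℝ)
          * μH[2] ({y : Fin 2 → ℝ | y 0 ^ 2 + y 1 ^ 2 ≤ 3 / 4} ∩ closedBall 0 ρ) := by
        simpa using hchart.hausdorffMeasure_image_le zero_le_two
    _ ≤ (6 : ENNReal) ^ (2 : ℝ) * volume (closedBall (0 : Fin 2 → ℝ) ρ) := by
        rw [hμ]
        gcongr
        exact inter_subset_right
    _ = ENNReal.ofReal (144 * ρ ^ 2) := by
        rw [Real.volume_pi_closedBall _ hρ0, Fintype.card_fin, ENNReal.rpow_two,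
          show (6 : ENNReal) = ENNReal.ofReal 6 by simp, ← ENNReal.ofReal_pow (by norm_num),
          ← ENNReal.ofReal_mul (by norm_num)]
        ring_nf

theorem hausdorffMeasure_sphere_le (hE : finrank ℝ E = 3) :
    μH[2] (sphere (0 : E) 1) ≤ ENNReal.ofReal 864 := by
  have := Module.finite_of_finrank_eq_succ hE
  let b : OrthonormalBasis (Fin 3) ℝ E := (stdOrthonormalBasis ℝ E).reindex (finCongr hE)
  set S := sphere (0 : E) 1
  have hcap (c : E) (hc : ‖c‖ = 1) : μH[2] (S ∩ closedBall c 1) ≤ ENNReal.ofReal 144 := by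
    simpa using hausdorffMeasure_sphere_inter_closedBall_le_of_le_one hE hc zero_le_one le_rfl
  have hcover : S ⊆ ⋃ i, (S ∩ closedBall (b i) 1 ∪ S ∩ closedBall (-b i) 1) := by
    intro σ hσ
    have hσ1 : ‖σ‖ = 1 := mem_sphere_zero_iff_norm.1 hσ
    have hmem {c : E} (hc : ‖c‖ = 1) (h : 1 / 2 ≤ ⟪σ, c⟫_ℝ) : σ ∈ S ∩ closedBall c 1 := by
      refine ⟨hσ, ?_⟩
      rw [mem_closedBall, dist_eq_norm, ← sq_le_one_iff₀ (norm_nonneg _),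
        norm_sub_sq_eq_two_sub_inner hσ1 hc]
      linarith
    obtain ⟨i, hi⟩ : ∃ i, 1 / 2 ≤ |⟪σ, b i⟫_ℝ| := by
      by_contra! h
      have hsum := b.sum_inner_mul_inner σ σ
      simp only [Fin.sum_univ_three, real_inner_comm σ, real_inner_self_eq_norm_sq, hσ1] at hsum
      have hsq (i : Fin 3) : ⟪σ, b i⟫_ℝ * ⟪σ, b i⟫_ℝ < 1 / 4 := by
        have := abs_lt.1 (h i)
        nlinarith
      linarith [hsq 0, hsq 1, hsq 2]
    refine mem_iUnion.2 ⟨i, ?_⟩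
    rcases le_abs'.1 hi with h | h
    · refine Or.inr (hmem (by rw [norm_neg]; exact b.orthonormal.1 i) ?_)
      rw [inner_neg_right]
      linarith
    · exact Or.inl (hmem (b.orthonormal.1 i) h)
  calc μH[2] S ≤ μH[2] (⋃ i, (S ∩ closedBall (b i) 1 ∪ S ∩ closedBall (-b i) 1)) :=
        measure_mono hcover
    _ ≤ ∑ i, μH[2] (S ∩ closedBall (b i) 1 ∪ S ∩ closedBall (-b i) 1) :=
        measure_iUnion_fintype_le _ _
    _ ≤ ∑ _i : Fin 3, (ENNReal.ofReal 144 + ENNReal.ofReal 144) := by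
        gcongr with i
        refine (measure_union_le _ _).trans (add_le_add (hcap _ (b.orthonormal.1 i)) ?_)
        exact hcap _ (by rw [norm_neg]; exact b.orthonormal.1 i)
    _ = ENNReal.ofReal 864 := by
        rw [← ENNReal.ofReal_add (by norm_num) (by norm_num)]
        simp only [Finset.sum_const, Finset.card_univ, Fintype.card_fin, nsmul_eq_mul]
        rw [← ENNReal.ofReal_natCast, ← ENNReal.ofReal_mul (by norm_num)]
        norm_num

theorem hausdorffMeasure_sphere_inter_closedBall_le (hE : finrank ℝ E = 3) {p : E}
    (hp : ‖p‖ = 1) {ρ : ℝ} (hρ : 0 ≤ ρ) :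
    μH[2] (sphere (0 : E) 1 ∩ closedBall p ρ) ≤ ENNReal.ofReal (864 * ρ ^ 2) := by
  rcases le_or_gt ρ 1 with h1 | h1
  · exact (hausdorffMeasure_sphere_inter_closedBall_le_of_le_one hE hp hρ h1).trans
      (ENNReal.ofReal_le_ofReal (by nlinarith))
  · exact (measure_mono inter_subset_left).trans
      ((hausdorffMeasure_sphere_le hE).trans (ENNReal.ofReal_le_ofReal (by nlinarith)))

end SphereMeasure

theorem lintegral_ofReal_le_of_meas_lt_le_rpow {α : Type*} [MeasurableSpace α] {μ : Measure α}
    {f : α → ℝ} {M K q : ℝ} (hf : AEMeasurable f μ) (hf0 : 0 ≤ᵐ[μ] f)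
    (hfM : ∀ᵐ x ∂μ, f x ≤ M) (hM : 0 ≤ M) (hK : 0 ≤ K) (hq : q < 1)
    (hlevel : ∀ t ∈ Ioc 0 M, μ {x | t < f x} ≤ ENNReal.ofReal (K * t ^ (-q))) :
    ∫⁻ x, ENNReal.ofReal (f x) ∂μ ≤ ENNReal.ofReal (K * M ^ (1 - q) / (1 - q)) := by
  have hq' : -1 < -q := by linarith
  have hnull : EqOn (fun t => μ {x | t < f x}) 0 (Ioi M) := fun t ht =>
    measure_mono_null (fun x hx => not_le.2 (lt_trans ht hx)) (ae_iff.1 hfM)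
  have hint : IntegrableOn (fun t : ℝ => K * t ^ (-q)) (Ioc 0 M) :=
    (intervalIntegrable_iff_integrableOn_Ioc_of_le hM).1
      ((intervalIntegral.intervalIntegrable_rpow' hq').const_mul K)
  have hint_eq : ∫ t in Ioc 0 M, K * t ^ (-q) = K * M ^ (1 - q) / (1 - q) := by
    rw [← intervalIntegral.integral_of_le hM, intervalIntegral.integral_const_mul,
      integral_rpow (Or.inl hq'), Real.zero_rpow (by linarith), neg_add_eq_sub]
    ring
  rw [lintegral_eq_lintegral_meas_lt μ hf0 hf, ← Ioc_union_Ioi_eq_Ioi hM,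
    lintegral_union measurableSet_Ioi (Ioc_disjoint_Ioi le_rfl),
    setLIntegral_congr_fun measurableSet_Ioi hnull, Pi.zero_def, lintegral_zero, add_zero,
    ← hint_eq, ofReal_integral_eq_lintegral_ofReal hint
      ((ae_restrict_iff' measurableSet_Ioc).2 (ae_of_all _ fun t ht =>
        mul_nonneg hK (Real.rpow_nonneg ht.1.le _)))]
  exact setLIntegral_mono' measurableSet_Ioc hlevel

section SphereIntegral

variable {E : Type*} [NormedAddCommGroup E] [InnerProductSpace ℝ E]

theorem one_add_norm_add_smul_sq_rpow_le (A : E) {σ : E} (hσ : ‖σ‖ = 1) {r s : ℝ} (hr : 0 ≤ r)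
    (hs : 0 ≤ s) : (1 + ‖A + r • σ‖ ^ 2) ^ (-s / 2) ≤ (1 + (‖A‖ - r) ^ 2) ^ (-s / 2) := by
  refine Real.rpow_le_rpow_of_nonpos (by positivity) ?_ (by linarith)
  have : 0 ≤ ‖A‖ * r * ‖σ + ‖A‖⁻¹ • A‖ ^ 2 := by positivity
  linarith [norm_add_smul_sq_eq A hσ r]

theorem mul_norm_add_inv_smul_sq_lt (A : E) {σ : E} (hσ : ‖σ‖ = 1) {r s t : ℝ} (hs : 0 < s)
    (ht : 0 < t) (h : t < (1 + ‖A + r • σ‖ ^ 2) ^ (-s / 2)) :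
    ‖A‖ * r * ‖σ + ‖A‖⁻¹ • A‖ ^ 2 < t ^ (-(2 / s)) := by
  have hlt : 1 + ‖A + r • σ‖ ^ 2 < t ^ (-(2 / s)) := by
    have := Real.rpow_lt_rpow_of_neg ht h (neg_neg_of_pos (div_pos two_pos hs))
    rwa [← Real.rpow_mul (by positivity), show -s / 2 * -(2 / s) = 1 by field_simp,
      Real.rpow_one] at this
  nlinarith [norm_add_smul_sq_eq A hσ r, sq_nonneg (‖A‖ - r)]

variable [MeasurableSpace E] [BorelSpace E]

theorem setLIntegral_sphere_rpow_le (hE : finrank ℝ E = 3) (A : E) {r s : ℝ} (hr : 0 ≤ r)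
    (hs : 0 ≤ s) :
    ∫⁻ σ in sphere (0 : E) 1, ENNReal.ofReal ((1 + ‖A + r • σ‖ ^ 2) ^ (-s / 2)) ∂μH[2]
      ≤ ENNReal.ofReal (864 * (1 + (‖A‖ - r) ^ 2) ^ (-s / 2)) := by
  calc ∫⁻ σ in sphere (0 : E) 1, ENNReal.ofReal ((1 + ‖A + r • σ‖ ^ 2) ^ (-s / 2)) ∂μH[2]
      ≤ ∫⁻ _ in sphere (0 : E) 1, ENNReal.ofReal ((1 + (‖A‖ - r) ^ 2) ^ (-s / 2)) ∂μH[2] :=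
        setLIntegral_mono measurable_const fun σ hσ => ENNReal.ofReal_le_ofReal <|
          one_add_norm_add_smul_sq_rpow_le A (mem_sphere_zero_iff_norm.1 hσ) hr hs
    _ ≤ ENNReal.ofReal ((1 + (‖A‖ - r) ^ 2) ^ (-s / 2)) * ENNReal.ofReal 864 := by
        rw [setLIntegral_const]
        gcongr
        exact hausdorffMeasure_sphere_le hE
    _ = ENNReal.ofReal (864 * (1 + (‖A‖ - r) ^ 2) ^ (-s / 2)) := by
        rw [← ENNReal.ofReal_mul (by positivity), mul_comm]

theorem hausdorffMeasure_setOf_lt_inter_sphere_le (hE : finrank ℝ E = 3) (A : E) {r s t : ℝ}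
    (har : 0 < ‖A‖ * r) (hs : 0 < s) (ht : 0 < t) :
    μH[2] ({σ | t < (1 + ‖A + r • σ‖ ^ 2) ^ (-s / 2)} ∩ sphere (0 : E) 1)
      ≤ ENNReal.ofReal (864 / (‖A‖ * r) * t ^ (-(2 / s))) := by
  have ha : 0 < ‖A‖ := pos_of_mul_pos_left har (pos_of_mul_pos_right har (norm_nonneg A)).le
  set ρ := √(t ^ (-(2 / s)) / (‖A‖ * r))
  have hρ : ρ ^ 2 = t ^ (-(2 / s)) / (‖A‖ * r) := Real.sq_sqrt (by positivity)
  have hp : ‖-(‖A‖⁻¹ • A)‖ = 1 := by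
    rw [norm_neg, norm_smul, norm_inv, norm_norm, inv_mul_cancel₀ ha.ne']
  have hsub : {σ | t < (1 + ‖A + r • σ‖ ^ 2) ^ (-s / 2)} ∩ sphere (0 : E) 1
      ⊆ sphere (0 : E) 1 ∩ closedBall (-(‖A‖⁻¹ • A)) ρ := by
    rintro σ ⟨hσt, hσ⟩
    refine ⟨hσ, ?_⟩
    have hlt := mul_norm_add_inv_smul_sq_lt A (mem_sphere_zero_iff_norm.1 hσ) hs ht hσt
    rw [mem_closedBall, dist_eq_norm, sub_neg_eq_add]
    refine Real.le_sqrt_of_sq_le ?_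
    rw [le_div_iff₀ har, mul_comm]
    exact hlt.le
  calc μH[2] ({σ | t < (1 + ‖A + r • σ‖ ^ 2) ^ (-s / 2)} ∩ sphere (0 : E) 1)
      ≤ μH[2] (sphere (0 : E) 1 ∩ closedBall (-(‖A‖⁻¹ • A)) ρ) := measure_mono hsub
    _ ≤ ENNReal.ofReal (864 * ρ ^ 2) :=
        hausdorffMeasure_sphere_inter_closedBall_le hE hp (Real.sqrt_nonneg _)
    _ = ENNReal.ofReal (864 / (‖A‖ * r) * t ^ (-(2 / s))) := by
        rw [hρ]; ring_nf

theorem setLIntegral_sphere_rpow_le_of_mul_pos (hE : finrank ℝ E = 3) (A : E) {r s : ℝ}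
    (har : 0 < ‖A‖ * r) (hs : 2 < s) :
    ∫⁻ σ in sphere (0 : E) 1, ENNReal.ofReal ((1 + ‖A + r • σ‖ ^ 2) ^ (-s / 2)) ∂μH[2]
      ≤ ENNReal.ofReal
          (864 / (‖A‖ * r) * (s / (s - 2)) * (1 + (‖A‖ - r) ^ 2) ^ ((2 - s) / 2)) := by
  have hr : 0 < r := pos_of_mul_pos_right har (norm_nonneg A)
  have hs0 : 0 < s := by linarith
  set X := 1 + (‖A‖ - r) ^ 2
  have hX0 : 0 < X := by positivity
  have hsphere : MeasurableSet (sphere (0 : E) 1) := isClosed_sphere.measurableSet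
  have hcont : Continuous fun σ : E => (1 + ‖A + r • σ‖ ^ 2) ^ (-s / 2) :=
    (by fun_prop : Continuous fun σ : E => 1 + ‖A + r • σ‖ ^ 2).rpow_const
      fun _ => Or.inl (by positivity)
  refine (lintegral_ofReal_le_of_meas_lt_le_rpow (K := 864 / (‖A‖ * r)) (q := 2 / s)
    hcont.aemeasurable (ae_of_all _ fun _ => Real.rpow_nonneg (by positivity) _)
    (ae_restrict_of_forall_mem hsphere fun σ hσ =>
      one_add_norm_add_smul_sq_rpow_le A (mem_sphere_zero_iff_norm.1 hσ) hr.le hs0.le)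
    (Real.rpow_nonneg hX0.le _) (by positivity) (by rwa [div_lt_one hs0])
    fun t ht => ?_).trans_eq ?_
  · rw [Measure.restrict_apply' hsphere]
    exact hausdorffMeasure_setOf_lt_inter_sphere_le hE A har hs0 ht.1
  · congr 1
    rw [← Real.rpow_mul hX0.le, show -s / 2 * (1 - 2 / s) = (2 - s) / 2 by field_simp; ring,
      show 1 - 2 / s = (s - 2) / s by field_simp]
    field_simp

end SphereIntegral

/-- For every `s > 2` there exists `C_s > 0` such that for all `A ∈ ℝ³` and `r > 0`,
`∫_{S²} ⟨A + rσ⟩^{-s} dσ ≤ C_s ⟨|A| - r⟩^{2-s} ⟨r⟩^{-2}`, where the integral is with respect to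
the surface measure (2-dimensional Hausdorff measure) on the unit sphere `S² ⊂ ℝ³`, and
`⟨x⟩ = (1 + |x|²)^{1/2}`. -/
theorem stmt_0 (s : ℝ) (hs : 2 < s) :
    ∃ C : ℝ, 0 < C ∧
      ∀ (A : EuclideanSpace ℝ (Fin 3)) (r : ℝ), 0 < r →
        (∫⁻ σ in Metric.sphere (0 : EuclideanSpace ℝ (Fin 3)) 1,
            ENNReal.ofReal ((1 + ‖A + r • σ‖ ^ 2) ^ (-s / 2)) ∂μH[2])
          ≤ ENNReal.ofReal
              (C * (1 + (‖A‖ - r) ^ 2) ^ ((2 - s) / 2) * (1 + r ^ 2)⁻¹) := by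
  have hE : finrank ℝ (EuclideanSpace ℝ (Fin 3)) = 3 := finrank_euclideanSpace_fin
  have hs2 : 0 < s - 2 := by linarith
  have hκ : 1 ≤ s / (s - 2) := by rw [le_div_iff₀ hs2]; linarith
  refine ⟨3456 * (s / (s - 2)), by positivity, fun A r hr => ?_⟩
  set X := 1 + (‖A‖ - r) ^ 2
  have hX0 : 0 < X := by positivity
  have hXpow : X ^ ((2 - s) / 2) = X * X ^ (-s / 2) := by
    rw [show (2 - s) / 2 = 1 + -s / 2 by ring, Real.rpow_add hX0, Real.rpow_one]
  have hY0 : 0 < X ^ (-s / 2) := Real.rpow_pos_of_pos hX0 _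
  have hsplit : 1 + r ^ 2 ≤ 4 * X ∨ 1 + r ^ 2 ≤ 4 * (‖A‖ * r) := by
    by_contra! h
    nlinarith [sq_nonneg (‖A‖ - r / 2)]
  rcases hsplit with hfar | hnear
  · refine (setLIntegral_sphere_rpow_le hE A hr.le (by linarith)).trans
      (ENNReal.ofReal_le_ofReal ?_)
    rw [hXpow, ← div_eq_mul_inv, le_div_iff₀ (by positivity)]
    nlinarith [mul_le_mul_of_nonneg_right hκ (mul_pos hX0 hY0).le]
  · have har : 0 < ‖A‖ * r := by nlinarith
    refine (setLIntegral_sphere_rpow_le_of_mul_pos hE A har hs).trans (ENNReal.ofReal_le_ofReal ?_)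
    rw [← div_eq_mul_inv, le_div_iff₀ (by positivity), div_mul_eq_mul_div, div_mul_eq_mul_div,
      div_mul_eq_mul_div, div_le_iff₀ har]
    have : 0 ≤ s / (s - 2) * X ^ ((2 - s) / 2) := by positivity
    nlinarith
end

section
/- Let s > 2 and 0 ≤ γ < min(s − 2, 1). Then there exists a constant C = C(s, γ) such that for every a ≥ 0, ∫₀^∞ ⟨a⟩^γ · r · ⟨r − a⟩^{−(s−2)} · ⟨r⟩^{−2} dr ≤ C. -/
open MeasureTheory

/-!
Subadditivity of `t ↦ t ^ γ` for `0 ≤ γ ≤ 1` and the triangle inequality `⟨a⟩ ≤ ⟨r⟩ + ⟨r - a⟩`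
split the weight `⟨a⟩ ^ γ` into `⟨r⟩ ^ γ + ⟨r - a⟩ ^ γ`. Since `r ⟨r⟩⁻² ≤ ⟨r⟩⁻¹`, the integrand is
then bounded by two products `⟨r⟩ ^ p ⟨r - a⟩ ^ q` with `p, q ≤ 0` and `p + q = -(s - 1 - γ)`,
and each such product is at most `⟨r⟩ ^ (p + q) + ⟨r - a⟩ ^ (p + q)`. As `s - 1 - γ > 1`, both
terms are integrable over `ℝ` with integrals independent of `a`.
-/

noncomputable def japaneseBracket (x : ℝ) : ℝ := √(1 + x ^ 2)

lemma one_le_japaneseBracket (x : ℝ) : 1 ≤ japaneseBracket x :=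
  Real.one_le_sqrt.2 (le_add_of_nonneg_right (sq_nonneg x))

lemma japaneseBracket_pos (x : ℝ) : 0 < japaneseBracket x :=
  one_pos.trans_le (one_le_japaneseBracket x)

lemma japaneseBracket_sq (x : ℝ) : japaneseBracket x ^ 2 = 1 + x ^ 2 :=
  Real.sq_sqrt (by positivity)

lemma abs_le_japaneseBracket (x : ℝ) : |x| ≤ japaneseBracket x :=
  Real.abs_le_sqrt (le_add_of_nonneg_left zero_le_one)

lemma one_add_sq_rpow_div_two (x p : ℝ) : (1 + x ^ 2) ^ (p / 2) = japaneseBracket x ^ p := by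
  rw [japaneseBracket, Real.sqrt_eq_rpow, ← Real.rpow_mul (by positivity)]
  ring_nf

lemma japaneseBracket_sub_le (x y : ℝ) :
    japaneseBracket (x - y) ≤ japaneseBracket x + japaneseBracket y := by
  have hxy : |x * y| ≤ japaneseBracket x * japaneseBracket y := by
    rw [abs_mul]
    exact mul_le_mul (abs_le_japaneseBracket x) (abs_le_japaneseBracket y) (abs_nonneg y)
      (japaneseBracket_pos x).le
  refine Real.sqrt_le_iff.2 ⟨by positivity [japaneseBracket_pos x, japaneseBracket_pos y], ?_⟩
  nlinarith [japaneseBracket_sq x, japaneseBracket_sq y, neg_abs_le (x * y)]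

lemma mul_inv_one_add_sq_le (x : ℝ) : x * (1 + x ^ 2)⁻¹ ≤ (japaneseBracket x)⁻¹ := by
  have hx := japaneseBracket_pos x
  rw [← japaneseBracket_sq, sq, mul_inv, ← mul_assoc]
  exact mul_le_of_le_one_left (inv_nonneg.2 hx.le)
    (mul_inv_le_one_of_le₀ ((le_abs_self x).trans (abs_le_japaneseBracket x)) hx.le)

lemma integrable_japaneseBracket_rpow_neg {p : ℝ} (hp : 1 < p) :
    Integrable fun x ↦ japaneseBracket x ^ (-p) := by
  have h := integrable_rpow_neg_one_add_norm_sq (E := ℝ) (μ := volume) (r := p)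
    (by simpa using hp)
  simpa [Real.norm_eq_abs, sq_abs, one_add_sq_rpow_div_two] using h

lemma rpow_mul_rpow_le_add_of_nonpos {x y p q : ℝ} (hx : 0 < x) (hy : 0 < y) (hp : p ≤ 0)
    (hq : q ≤ 0) : x ^ p * y ^ q ≤ x ^ (p + q) + y ^ (p + q) := by
  wlog hxy : x ≤ y generalizing x y p q
  · rw [mul_comm, add_comm p, add_comm (x ^ _)]
    exact this hy hx hq hp (le_of_not_ge hxy)
  calc x ^ p * y ^ q ≤ x ^ p * x ^ q :=
        mul_le_mul_of_nonneg_left (Real.rpow_le_rpow_of_nonpos hx hxy hq) (by positivity)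
    _ = x ^ (p + q) := (Real.rpow_add hx p q).symm
    _ ≤ x ^ (p + q) + y ^ (p + q) := le_add_of_nonneg_right (by positivity)

lemma add_rpow_mul_inv_mul_rpow_neg_le {x y γ β : ℝ} (hx : 0 < x) (hy : 0 < y) (hγ₀ : 0 ≤ γ)
    (hγ₁ : γ ≤ 1) (hγβ : γ ≤ β) :
    (x + y) ^ γ * x⁻¹ * y ^ (-β) ≤ 2 * (x ^ (-(1 + β - γ)) + y ^ (-(1 + β - γ))) := by
  have hsplit : (x ^ γ + y ^ γ) * x⁻¹ * y ^ (-β) =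
      x ^ (γ - 1) * y ^ (-β) + x ^ (-1 : ℝ) * y ^ (γ + -β) := by
    rw [Real.rpow_sub_one hx.ne', Real.rpow_neg_one, Real.rpow_add hy]
    ring
  calc (x + y) ^ γ * x⁻¹ * y ^ (-β) ≤ (x ^ γ + y ^ γ) * x⁻¹ * y ^ (-β) := by
        gcongr
        exact Real.rpow_add_le_add_rpow hx.le hy.le hγ₀ hγ₁
    _ = x ^ (γ - 1) * y ^ (-β) + x ^ (-1 : ℝ) * y ^ (γ + -β) := hsplit
    _ ≤ (x ^ (γ - 1 + -β) + y ^ (γ - 1 + -β)) + (x ^ (-1 + (γ + -β)) + y ^ (-1 + (γ + -β))) :=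
        add_le_add (rpow_mul_rpow_le_add_of_nonpos hx hy (by linarith) (by linarith))
          (rpow_mul_rpow_le_add_of_nonpos hx hy (by norm_num) (by linarith))
    _ = 2 * (x ^ (-(1 + β - γ)) + y ^ (-(1 + β - γ))) := by ring_nf

lemma weighted_integrand_le_japaneseBracket {s γ : ℝ} (hγ₀ : 0 ≤ γ) (hγ₁ : γ ≤ 1)
    (hγs : γ ≤ s - 2) (a r : ℝ) :
    (1 + a ^ 2) ^ (γ / 2) * r * (1 + (r - a) ^ 2) ^ (-(s - 2) / 2) * (1 + r ^ 2)⁻¹ ≤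
      2 * (japaneseBracket r ^ (-(s - 1 - γ)) + japaneseBracket (r - a) ^ (-(s - 1 - γ))) := by
  have hr := japaneseBracket_pos r
  have hra := japaneseBracket_pos (r - a)
  have hweight : japaneseBracket a ^ γ ≤ (japaneseBracket r + japaneseBracket (r - a)) ^ γ :=
    Real.rpow_le_rpow (japaneseBracket_pos a).le (by simpa using japaneseBracket_sub_le r (r - a))
      hγ₀
  rw [one_add_sq_rpow_div_two, one_add_sq_rpow_div_two]
  calc japaneseBracket a ^ γ * r * japaneseBracket (r - a) ^ (-(s - 2)) * (1 + r ^ 2)⁻¹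
      = japaneseBracket a ^ γ * japaneseBracket (r - a) ^ (-(s - 2)) * (r * (1 + r ^ 2)⁻¹) := by
        ring
    _ ≤ japaneseBracket a ^ γ * japaneseBracket (r - a) ^ (-(s - 2)) * (japaneseBracket r)⁻¹ :=
        mul_le_mul_of_nonneg_left (mul_inv_one_add_sq_le r) (by positivity [japaneseBracket_pos a])
    _ ≤ (japaneseBracket r + japaneseBracket (r - a)) ^ γ * japaneseBracket (r - a) ^ (-(s - 2))
          * (japaneseBracket r)⁻¹ := by
        gcongr
    _ = (japaneseBracket r + japaneseBracket (r - a)) ^ γ * (japaneseBracket r)⁻¹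
          * japaneseBracket (r - a) ^ (-(s - 2)) := by ring
    _ ≤ 2 * (japaneseBracket r ^ (-(1 + (s - 2) - γ))
          + japaneseBracket (r - a) ^ (-(1 + (s - 2) - γ))) :=
        add_rpow_mul_inv_mul_rpow_neg_le hr hra hγ₀ hγ₁ hγs
    _ = _ := by ring_nf

theorem stmt_1_general (s γ : ℝ) (hγ₀ : 0 ≤ γ) (hγ : γ < min (s - 2) 1) :
    ∃ C : ℝ, ∀ a : ℝ, 0 ≤ a →
      (∫⁻ r in Set.Ioi (0 : ℝ),
          ENNReal.ofReal ((1 + a ^ 2) ^ (γ / 2) * r *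
            (1 + (r - a) ^ 2) ^ (-(s - 2) / 2) * (1 + r ^ 2)⁻¹))
        ≤ ENNReal.ofReal C := by
  obtain ⟨hγs, hγ₁⟩ := lt_min_iff.1 hγ
  set g : ℝ → ℝ := fun x ↦ japaneseBracket x ^ (-(s - 1 - γ))
  have hg : Integrable g := integrable_japaneseBracket_rpow_neg (by linarith)
  refine ⟨4 * ∫ x, g x, fun a _ ↦ ?_⟩
  have hG : Integrable fun r ↦ 2 * (g r + g (r - a)) := (hg.add (hg.comp_sub_right a)).const_mul 2
  have hG_nonneg : 0 ≤ᵐ[volume] fun r ↦ 2 * (g r + g (r - a)) :=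
    Filter.Eventually.of_forall fun r ↦ by
      positivity [japaneseBracket_pos r, japaneseBracket_pos (r - a)]
  calc _ ≤ ∫⁻ r, ENNReal.ofReal ((1 + a ^ 2) ^ (γ / 2) * r *
            (1 + (r - a) ^ 2) ^ (-(s - 2) / 2) * (1 + r ^ 2)⁻¹) := setLIntegral_le_lintegral _ _
    _ ≤ ∫⁻ r, ENNReal.ofReal (2 * (g r + g (r - a))) :=
        lintegral_mono fun r ↦ ENNReal.ofReal_le_ofReal
          (weighted_integrand_le_japaneseBracket hγ₀ hγ₁.le hγs.le a r)
    _ = ENNReal.ofReal (∫ r, 2 * (g r + g (r - a))) :=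
        (ofReal_integral_eq_lintegral_ofReal hG hG_nonneg).symm
    _ = ENNReal.ofReal (4 * ∫ x, g x) := by
        rw [integral_const_mul, integral_add hg (hg.comp_sub_right a), integral_sub_right_eq_self]
        ring_nf

/-- Let `s > 2` and `0 ≤ γ < min(s-2, 1)`. Then there exists a constant
`C = C(s,γ)` such that for every `a ≥ 0`,
`∫₀^∞ ⟨a⟩^γ · r · ⟨r-a⟩^{-(s-2)} · ⟨r⟩^{-2} dr ≤ C`, where `⟨x⟩ = (1 + x²)^{1/2}`. -/
theorem stmt_1 (s γ : ℝ) (hs : 2 < s) (hγ₀ : 0 ≤ γ) (hγ : γ < min (s - 2) 1) :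
    ∃ C : ℝ, ∀ a : ℝ, 0 ≤ a →
      (∫⁻ r in Set.Ioi (0 : ℝ),
          ENNReal.ofReal ((1 + a ^ 2) ^ (γ / 2) * r *
            (1 + (r - a) ^ 2) ^ (-(s - 2) / 2) * (1 + r ^ 2)⁻¹))
        ≤ ENNReal.ofReal C :=
  stmt_1_general s γ hγ₀ hγ
end

section
/- Let s₁ > 2 and s₂ > 2. Then the double integral ∫₀^∞ ∫₀^∞ u · v · ⟨u⟩^{−s₁} · ⟨v − u⟩^{−(s₂−2)} · ⟨v⟩^{−2} du dv is finite. -/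
/-!
With `⟨x⟩ = (1 + x²)^{1/2}`, bound `u ≤ ⟨u⟩`, `v ≤ ⟨v⟩`, and trade a small power `δ ≤ s₂ - 2` of the
coupling factor `⟨v - u⟩⁻¹` for decay in `v` through Peetre's inequality `⟨v⟩ ≤ √2 ⟨u⟩ ⟨v - u⟩`.
The integrand is then dominated by `⟨u⟩^{-(s₁ - 1 - δ)} ⟨v⟩^{-(1 + δ)}`, a product of two functions
integrable on the line as soon as `0 < δ < s₁ - 2`.
-/

open MeasureTheory Real Set

lemma integrable_one_add_sq_rpow_neg {r : ℝ} (hr : 1 < r) :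
    Integrable fun x : ℝ => (1 + x ^ 2) ^ (-r / 2) := by
  simpa [Real.norm_eq_abs, sq_abs] using
    integrable_rpow_neg_one_add_norm_sq (E := ℝ) (by simpa using hr)

lemma le_one_add_sq_rpow_half (x : ℝ) : x ≤ (1 + x ^ 2) ^ (1 / 2 : ℝ) := by
  rw [← Real.sqrt_eq_rpow]
  exact Real.le_sqrt_of_sq_le (by linarith)

lemma one_add_sq_le_two_mul_one_add_sq_mul_one_add_sq_sub (u v : ℝ) :
    1 + v ^ 2 ≤ 2 * (1 + u ^ 2) * (1 + (v - u) ^ 2) := by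
  nlinarith [sq_nonneg (u - (v - u)), sq_nonneg (u * (v - u))]

lemma one_add_sq_sub_rpow_neg_le {t : ℝ} (ht : 0 ≤ t) (u v : ℝ) :
    (1 + (v - u) ^ 2) ^ (-t) ≤ 2 ^ t * (1 + u ^ 2) ^ t * (1 + v ^ 2) ^ (-t) := by
  have hpeetre : (1 + v ^ 2) ^ t ≤ 2 ^ t * (1 + u ^ 2) ^ t * (1 + (v - u) ^ 2) ^ t := by
    rw [← mul_rpow (by positivity) (by positivity), ← mul_rpow (by positivity) (by positivity)]
    exact rpow_le_rpow (by positivity) (one_add_sq_le_two_mul_one_add_sq_mul_one_add_sq_sub u v) ht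
  rw [rpow_neg (by positivity), rpow_neg (by positivity), ← div_eq_mul_inv,
    le_div_iff₀ (by positivity), inv_mul_le_iff₀ (by positivity)]
  linarith

lemma integrand_le_separated {s₁ s₂ δ : ℝ} (hδ : 0 ≤ δ) (hδs₂ : δ ≤ s₂ - 2) {u v : ℝ}
    (hu : 0 < u) (hv : 0 < v) :
    u * v * (1 + u ^ 2) ^ (-s₁ / 2) * (1 + (v - u) ^ 2) ^ (-(s₂ - 2) / 2) * (1 + v ^ 2)⁻¹
      ≤ 2 ^ (δ / 2) * (1 + v ^ 2) ^ (-(1 + δ) / 2) * (1 + u ^ 2) ^ (-(s₁ - 1 - δ) / 2) := by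
  have ha : 0 < 1 + u ^ 2 := by positivity
  have hb : 0 < 1 + v ^ 2 := by positivity
  have hdecay : (1 + (v - u) ^ 2) ^ (-(s₂ - 2) / 2) ≤ (1 + (v - u) ^ 2) ^ (-(δ / 2)) :=
    rpow_le_rpow_of_exponent_le (by nlinarith) (by linarith)
  calc u * v * (1 + u ^ 2) ^ (-s₁ / 2) * (1 + (v - u) ^ 2) ^ (-(s₂ - 2) / 2) * (1 + v ^ 2)⁻¹
      ≤ (1 + u ^ 2) ^ (1 / 2 : ℝ) * (1 + v ^ 2) ^ (1 / 2 : ℝ) * (1 + u ^ 2) ^ (-s₁ / 2) *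
          (2 ^ (δ / 2) * (1 + u ^ 2) ^ (δ / 2) * (1 + v ^ 2) ^ (-(δ / 2))) *
          (1 + v ^ 2) ^ (-1 : ℝ) := by
        rw [rpow_neg_one]
        gcongr
        · exact le_one_add_sq_rpow_half u
        · exact le_one_add_sq_rpow_half v
        · exact hdecay.trans (one_add_sq_sub_rpow_neg_le (by positivity) u v)
    _ = 2 ^ (δ / 2) * (1 + v ^ 2) ^ (-(1 + δ) / 2) * (1 + u ^ 2) ^ (-(s₁ - 1 - δ) / 2) := by
        rw [show -(1 + δ) / 2 = 1 / 2 + -(δ / 2) + -1 by ring,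
          show -(s₁ - 1 - δ) / 2 = 1 / 2 + -s₁ / 2 + δ / 2 by ring,
          rpow_add ha, rpow_add ha, rpow_add hb, rpow_add hb]
        ring

/-- Let `s₁ > 2` and `s₂ > 2`. Then the double integral
`∫₀^∞ ∫₀^∞ u · v · ⟨u⟩^{-s₁} · ⟨v-u⟩^{-(s₂-2)} · ⟨v⟩^{-2} du dv` is finite,
where `⟨x⟩ = (1 + x²)^{1/2}`. -/
theorem stmt_2 (s₁ s₂ : ℝ) (h₁ : 2 < s₁) (h₂ : 2 < s₂) :
    (∫⁻ v in Set.Ioi (0 : ℝ), ∫⁻ u in Set.Ioi (0 : ℝ),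
        ENNReal.ofReal (u * v * (1 + u ^ 2) ^ (-s₁ / 2) *
          (1 + (v - u) ^ 2) ^ (-(s₂ - 2) / 2) * (1 + v ^ 2)⁻¹))
      < ⊤ := by
  obtain ⟨δ, hδ, hδs⟩ := exists_between (lt_min (sub_pos.2 h₁) (sub_pos.2 h₂))
  rw [lt_min_iff] at hδs
  have hV := ((integrable_one_add_sq_rpow_neg (r := 1 + δ) (by linarith)).const_mul
    (2 ^ (δ / 2))).integrableOn (s := Ioi 0)
  have hU := (integrable_one_add_sq_rpow_neg (r := s₁ - 1 - δ) (by linarith)).integrableOn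
    (s := Ioi 0)
  calc _ ≤ ∫⁻ v in Ioi (0 : ℝ), ∫⁻ u in Ioi (0 : ℝ),
          ENNReal.ofReal (2 ^ (δ / 2) * (1 + v ^ 2) ^ (-(1 + δ) / 2)) *
            ENNReal.ofReal ((1 + u ^ 2) ^ (-(s₁ - 1 - δ) / 2)) := by
        refine setLIntegral_mono' measurableSet_Ioi fun v hv => ?_
        refine setLIntegral_mono' measurableSet_Ioi fun u hu => ?_
        rw [← ENNReal.ofReal_mul (by positivity)]
        exact ENNReal.ofReal_le_ofReal (integrand_le_separated hδ.le hδs.2.le hu hv)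
    _ = (∫⁻ v in Ioi (0 : ℝ), ENNReal.ofReal (2 ^ (δ / 2) * (1 + v ^ 2) ^ (-(1 + δ) / 2))) *
          ∫⁻ u in Ioi (0 : ℝ), ENNReal.ofReal ((1 + u ^ 2) ^ (-(s₁ - 1 - δ) / 2)) :=
        lintegral_lintegral_mul (by fun_prop) (by fun_prop)
    _ < ⊤ := ENNReal.mul_lt_top hV.setLIntegral_lt_top hU.setLIntegral_lt_top
end

section
/- Let s > 1/2. There exists a constant C_s such that for all ε₁, ε₂ ∈ [0, 1), all a, b ∈ ℝ, all p ∈ ℝ³, and all unit vectors v, w ∈ S² with v ≠ ±w, ∫_{ℝ³} 1_{[0,ε₁]}(x·v − a) · 1_{[0,ε₂]}(x·w − b) · ⟨x + p⟩^{−2s} dx ≤ C_s ( ε₁ ε₂ / |v − w| + ε₁ ε₂ / |v + w| ), where 1_{[0,ε]} denotes the indicator function of the interval [0, ε]. -/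
/-!
Pick a unit vector `e` orthogonal to `v` and `w`. Since `‖x + p‖ ≥ |⟪x + p, e⟫|`, the weight is
at most `(1 + (⟪x, e⟫ + ⟪p, e⟫)²)^(-s)`, so the integrand is bounded by a product of functions of
the coordinates `⟪x, v⟫`, `⟪x, w⟫`, `⟪x, e⟫`. The linear change to these coordinates has Jacobian
`|det (v, w, e)|⁻¹ = 2 / (‖v - w‖ ‖v + w‖)`, which bounds the integral by
`2 ε₁ ε₂ ∫ (1 + t²)^(-s) dt / (‖v - w‖ ‖v + w‖)`, finite for `s > 1/2`. Finally
`‖v - w‖² + ‖v + w‖² = 4` gives `‖v - w‖ + ‖v + w‖ ≥ 2`, i.e. `2 / (AB) ≤ 1 / A + 1 / B`.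
-/

open MeasureTheory Matrix

section ChangeOfVariables

variable {E : Type*} [NormedAddCommGroup E] [NormedSpace ℝ E] [MeasurableSpace E] [BorelSpace E]
  [FiniteDimensional ℝ E] (μ : Measure E) [μ.IsAddHaarMeasure]

theorem lintegral_comp_linearMap_of_det_ne_zero {T : E →ₗ[ℝ] E} (hT : LinearMap.det T ≠ 0)
    {g : E → ENNReal} (hg : Measurable g) :
    ∫⁻ x, g (T x) ∂μ = ENNReal.ofReal |(LinearMap.det T)⁻¹| * ∫⁻ y, g y ∂μ := by
  rw [← lintegral_map hg (LinearMap.continuous_of_finiteDimensional T).measurable,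
    Measure.map_linearMap_addHaar_eq_smul_addHaar μ hT, lintegral_smul_measure, smul_eq_mul]

end ChangeOfVariables

namespace EuclideanSpace

variable {ι : Type*} [Fintype ι]

theorem lintegral_ofReal_prod_eq {f : ι → ℝ → ℝ} (hf : ∀ i, Integrable (f i))
    (hf₀ : ∀ i t, 0 ≤ f i t) :
    ∫⁻ y : EuclideanSpace ℝ ι, ENNReal.ofReal (∏ i, f i (y i)) =
      ENNReal.ofReal (∏ i, ∫ t, f i t) := by
  rw [← (PiLp.volume_preserving_toLp ι).lintegral_comp_emb
    (MeasurableEquiv.toLp 2 (ι → ℝ)).measurableEmbedding]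
  rw [volume_pi, ← ofReal_integral_eq_lintegral_ofReal (Integrable.fintype_prod hf)
    (ae_of_all _ fun y => Finset.prod_nonneg fun i _ => hf₀ i (y i)),
    integral_fintype_prod_eq_prod]

variable [DecidableEq ι]

theorem lintegral_ofReal_prod_inner_eq {u : ι → EuclideanSpace ℝ ι}
    (hu : (of fun i j => u i j).det ≠ 0) {f : ι → ℝ → ℝ} (hm : ∀ i, Measurable (f i))
    (hf : ∀ i, Integrable (f i)) (hf₀ : ∀ i t, 0 ≤ f i t) :
    ∫⁻ x : EuclideanSpace ℝ ι, ENNReal.ofReal (∏ i, f i (inner ℝ x (u i))) =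
      ENNReal.ofReal (|(of fun i j => u i j).det|⁻¹ * ∏ i, ∫ t, f i t) := by
  set T := toEuclideanLin (of fun i j => u i j)
  have hdet : LinearMap.det T = (of fun i j => u i j).det := by
    rw [show T = toLin (basisFun ι ℝ).toBasis (basisFun ι ℝ).toBasis (of fun i j => u i j)
      from rfl, LinearMap.det_toLin]
  have hT : ∀ x i, T x i = inner ℝ x (u i) := by
    intro x i
    simp [T, inner_eq_star_dotProduct, mulVec, dotProduct, mul_comm]
  have hg : Measurable fun y : EuclideanSpace ℝ ι => ENNReal.ofReal (∏ i, f i (y i)) := by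
    fun_prop
  simp_rw [← hT]
  rw [lintegral_comp_linearMap_of_det_ne_zero volume (hdet ▸ hu) hg, hdet,
    lintegral_ofReal_prod_eq hf hf₀, ENNReal.ofReal_mul (by positivity), abs_inv]

end EuclideanSpace

section Geometry

variable {E : Type*} [NormedAddCommGroup E] [InnerProductSpace ℝ E]

theorem exists_norm_eq_one_inner_eq_zero_of_two_lt_finrank [FiniteDimensional ℝ E]
    (hE : 2 < Module.finrank ℝ E) (v w : E) :
    ∃ e : E, ‖e‖ = 1 ∧ inner ℝ v e = 0 ∧ inner ℝ w e = 0 := by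
  set K := Submodule.span ℝ (Set.range ![v, w])
  have hK : Module.finrank ℝ K ≤ 2 := (finrank_range_le_card _).trans (by simp)
  have hKperp : Kᗮ ≠ ⊥ := by
    intro h
    have := K.finrank_add_finrank_orthogonal
    rw [h, finrank_bot] at this
    omega
  obtain ⟨x, hx, hx₀⟩ := (Submodule.ne_bot_iff _).mp hKperp
  have hperp (i : Fin 2) : inner ℝ (![v, w] i) x = 0 :=
    (K.mem_orthogonal x).mp hx _ (Submodule.subset_span ⟨i, rfl⟩)
  have hvx : inner ℝ v x = 0 := hperp 0
  have hwx : inner ℝ w x = 0 := hperp 1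
  refine ⟨(‖x‖⁻¹ : ℝ) • x, norm_smul_inv_norm hx₀, ?_, ?_⟩ <;>
    simp only [inner_smul_right, hvx, hwx, mul_zero]

theorem one_add_norm_sq_rpow_neg_le {e : E} (he : ‖e‖ = 1) {s : ℝ} (hs : 0 ≤ s) (y : E) :
    (1 + ‖y‖ ^ 2) ^ (-s) ≤ (1 + inner ℝ y e ^ 2) ^ (-s) := by
  have h : |inner ℝ y e| ≤ ‖y‖ := by simpa [he] using abs_real_inner_le_norm y e
  refine Real.rpow_le_rpow_of_nonpos (by positivity) ?_ (neg_nonpos.mpr hs)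
  rw [← sq_abs (inner ℝ y e)]
  gcongr

end Geometry

theorem det_sq_eq_det_gram {ι : Type*} [Fintype ι] [DecidableEq ι]
    (u : ι → EuclideanSpace ℝ ι) :
    (of fun i j => u i j).det ^ 2 = (gram ℝ u).det := by
  rw [sq]
  nth_rewrite 2 [← det_transpose]
  rw [← det_mul]
  congr 1
  ext i j
  simp [mul_apply, EuclideanSpace.inner_eq_star_dotProduct, dotProduct, mul_comm]

theorem abs_det_eq_norm_sub_mul_norm_add_div_two {v w e : EuclideanSpace ℝ (Fin 3)}
    (hv : ‖v‖ = 1) (hw : ‖w‖ = 1) (he : ‖e‖ = 1) (hve : inner ℝ v e = 0)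
    (hwe : inner ℝ w e = 0) :
    |(of fun i j => ![v, w, e] i j).det| = ‖v - w‖ * ‖v + w‖ / 2 := by
  have hdet : (of fun i j => ![v, w, e] i j).det ^ 2 = 1 - inner ℝ v w ^ 2 := by
    rw [det_sq_eq_det_gram, det_fin_three]
    simp only [gram_apply, cons_val_zero, cons_val_one, cons_val, real_inner_self_eq_norm_sq, hv,
      hw, he, hve, hwe, real_inner_comm v e, real_inner_comm w e, real_inner_comm v w]
    ring
  have hsub : ‖v - w‖ ^ 2 = 2 - 2 * inner ℝ v w := by
    rw [norm_sub_sq_real, hv, hw]; ring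
  have hadd : ‖v + w‖ ^ 2 = 2 + 2 * inner ℝ v w := by
    rw [norm_add_sq_real, hv, hw]; ring
  rw [← sq_eq_sq₀ (abs_nonneg _) (by positivity), sq_abs, hdet, div_pow, mul_pow, hsub, hadd]
  ring

theorem integrable_one_add_sq_rpow_neg_s12 {s : ℝ} (hs : 1 / 2 < s) :
    Integrable fun t : ℝ => (1 + t ^ 2) ^ (-s) := by
  have h := integrable_rpow_neg_one_add_norm_sq (E := ℝ) (μ := volume) (r := 2 * s)
    (by simp only [Module.finrank_self, Nat.cast_one]; linarith)
  simpa [neg_div] using h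

theorem integrable_indicator_Icc_sub (ε a : ℝ) :
    Integrable fun t : ℝ => (Set.Icc 0 ε).indicator (fun _ => (1 : ℝ)) (t - a) :=
  ((integrable_indicator_iff measurableSet_Icc).mpr
    (integrableOn_const measure_Icc_lt_top.ne)).comp_sub_right a

theorem integral_indicator_Icc_sub {ε : ℝ} (hε : 0 ≤ ε) (a : ℝ) :
    ∫ t : ℝ, (Set.Icc 0 ε).indicator (fun _ => (1 : ℝ)) (t - a) = ε := by
  rw [integral_sub_right_eq_self (fun t => (Set.Icc 0 ε).indicator (fun _ => (1 : ℝ)) t),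
    integral_indicator_const _ measurableSet_Icc, Real.volume_real_Icc_of_le hε, sub_zero,
    smul_eq_mul, mul_one]

theorem lintegral_slab_inter_le {s : ℝ} (hs : 1 / 2 < s) {ε₁ ε₂ : ℝ} (hε₁ : 0 ≤ ε₁)
    (hε₂ : 0 ≤ ε₂) (a b : ℝ) {p v w e : EuclideanSpace ℝ (Fin 3)} (he : ‖e‖ = 1)
    (hdet : (of fun i j => ![v, w, e] i j).det ≠ 0) :
    ∫⁻ x : EuclideanSpace ℝ (Fin 3),
        ENNReal.ofReal ((Set.Icc 0 ε₁).indicator (fun _ => (1 : ℝ)) (inner ℝ x v - a) *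
          (Set.Icc 0 ε₂).indicator (fun _ => (1 : ℝ)) (inner ℝ x w - b) *
          (1 + ‖x + p‖ ^ 2) ^ (-s))
      ≤ ENNReal.ofReal (|(of fun i j => ![v, w, e] i j).det|⁻¹ *
          (ε₁ * ε₂ * ∫ t, (1 + t ^ 2) ^ (-s))) := by
  set f : Fin 3 → ℝ → ℝ := ![fun t => (Set.Icc 0 ε₁).indicator (fun _ => 1) (t - a),
    fun t => (Set.Icc 0 ε₂).indicator (fun _ => 1) (t - b),
    fun t => (1 + (t + inner ℝ p e) ^ 2) ^ (-s)]
  have hf₀ (i : Fin 3) (t : ℝ) : 0 ≤ f i t := by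
    fin_cases i
    · exact Set.indicator_nonneg (fun _ _ => zero_le_one) _
    · exact Set.indicator_nonneg (fun _ _ => zero_le_one) _
    · exact Real.rpow_nonneg (by positivity) _
  have hm (i : Fin 3) : Measurable (f i) := by
    fin_cases i <;> simp only [f, Fin.zero_eta, Fin.mk_one, Fin.reduceFinMk, cons_val] <;>
      fun_prop (disch := exact measurableSet_Icc)
  have hf (i : Fin 3) : Integrable (f i) := by
    fin_cases i
    · exact integrable_indicator_Icc_sub ε₁ a
    · exact integrable_indicator_Icc_sub ε₂ b
    · exact (integrable_one_add_sq_rpow_neg_s12 hs).comp_add_right _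
  have hintegral : ∏ i, ∫ t, f i t = ε₁ * ε₂ * ∫ t, (1 + t ^ 2) ^ (-s) := by
    simp [Fin.prod_univ_three, f, integral_indicator_Icc_sub hε₁, integral_indicator_Icc_sub hε₂,
      integral_add_right_eq_self fun t : ℝ => (1 + t ^ 2) ^ (-s)]
  rw [← hintegral, ← EuclideanSpace.lintegral_ofReal_prod_inner_eq hdet hm hf hf₀]
  refine lintegral_mono fun x => ENNReal.ofReal_le_ofReal ?_
  simp only [Fin.prod_univ_three, f, cons_val]
  rw [← inner_add_left]
  exact mul_le_mul_of_nonneg_left (one_add_norm_sq_rpow_neg_le he (by linarith) _)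
    (mul_nonneg (hf₀ 0 _) (hf₀ 1 _))

/-- Let `s > 1/2`. There exists a constant `C_s` such that for all
`ε₁, ε₂ ∈ [0,1)`, all `a, b ∈ ℝ`, all `p ∈ ℝ³`, and all unit vectors `v, w ∈ S²` with
`v ≠ ±w`, `∫_{ℝ³} 1_{[0,ε₁]}(x·v - a) 1_{[0,ε₂]}(x·w - b) ⟨x+p⟩^{-2s} dx ≤
C_s (ε₁ε₂/|v-w| + ε₁ε₂/|v+w|)`, where `⟨x⟩ = (1 + |x|²)^{1/2}`. -/
theorem stmt_12 (s : ℝ) (hs : 1 / 2 < s) :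
    ∃ C : ℝ, ∀ (ε₁ ε₂ : ℝ), 0 ≤ ε₁ → ε₁ < 1 → 0 ≤ ε₂ → ε₂ < 1 →
      ∀ (a b : ℝ) (p v w : EuclideanSpace ℝ (Fin 3)),
        ‖v‖ = 1 → ‖w‖ = 1 → v ≠ w → v ≠ -w →
        (∫⁻ x : EuclideanSpace ℝ (Fin 3),
            ENNReal.ofReal ((Set.Icc 0 ε₁).indicator (fun _ => (1 : ℝ)) ((inner ℝ x v : ℝ) - a) *
              (Set.Icc 0 ε₂).indicator (fun _ => (1 : ℝ)) ((inner ℝ x w : ℝ) - b) *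
              (1 + ‖x + p‖ ^ 2) ^ (-s)))
          ≤ ENNReal.ofReal (C * (ε₁ * ε₂ / ‖v - w‖ + ε₁ * ε₂ / ‖v + w‖)) := by
  set J := ∫ t : ℝ, (1 + t ^ 2) ^ (-s)
  refine ⟨J, fun ε₁ ε₂ hε₁ _ hε₂ _ a b p v w hv hw hvw hvw' => ?_⟩
  obtain ⟨e, he, hve, hwe⟩ :=
    exists_norm_eq_one_inner_eq_zero_of_two_lt_finrank (by simp) v w
  have hA : 0 < ‖v - w‖ := norm_pos_iff.mpr (sub_ne_zero.mpr hvw)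
  have hB : 0 < ‖v + w‖ := norm_pos_iff.mpr fun h => hvw' (eq_neg_of_add_eq_zero_left h)
  have hAB : 2 ≤ ‖v - w‖ + ‖v + w‖ := by
    nlinarith [parallelogram_law_with_norm ℝ v w]
  have hdet := abs_det_eq_norm_sub_mul_norm_add_div_two hv hw he hve hwe
  have hdet₀ : (of fun i j => ![v, w, e] i j).det ≠ 0 := abs_pos.mp (hdet ▸ by positivity)
  have hJ : 0 ≤ J := integral_nonneg fun t => by positivity
  refine (lintegral_slab_inter_le hs hε₁ hε₂ a b he hdet₀).trans (ENNReal.ofReal_le_ofReal ?_)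
  calc |(of fun i j => ![v, w, e] i j).det|⁻¹ * (ε₁ * ε₂ * J)
      = 2 / (‖v - w‖ * ‖v + w‖) * (ε₁ * ε₂ * J) := by rw [hdet, inv_div]
    _ ≤ (‖v - w‖ + ‖v + w‖) / (‖v - w‖ * ‖v + w‖) * (ε₁ * ε₂ * J) := by gcongr
    _ = J * (ε₁ * ε₂ / ‖v - w‖ + ε₁ * ε₂ / ‖v + w‖) := by field_simp; ring
end

section
/- Let ψ : ℝ → [0,∞) be a smooth even function supported in [−1, 1] with ∫_ℝ ψ(t) dt = 1, and for ε ∈ (0,1] set ψ_ε(t) := (1/ε) ψ(t/ε). Let s > 1/2. Then there exists a constant C (depending on s and ψ) such that for all nonzero y, y′ ∈ ℝ³ with ŷ ≠ ±ŷ′ (where ŷ := y/|y|), all p ∈ ℝ³, and all ε ∈ (0,1], ∫_{ℝ³} ψ_ε(x·y) ψ_ε(x·y′) ⟨x + p⟩^{−2s} dx ≤ C (1/(|y| |y′|)) ( 1/|ŷ − ŷ′| + 1/|ŷ + ŷ′| ). -/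
open MeasureTheory Matrix
open scoped RealInnerProductSpace

theorem lintegral_fin_nat_prod_eq_prod' {n : ℕ} (f : Fin n → ℝ → ENNReal)
    (hf : ∀ i, Measurable (f i)) :
    ∫⁻ x : Fin n → ℝ, ∏ i, f i (x i) = ∏ i, ∫⁻ t, f i t := by
  induction n with
  | zero => simp [MeasureTheory.volume_pi]
  | succ n ih =>
      have step : ∫⁻ x : Fin (n+1) → ℝ, ∏ i, f i (x i)
          = ∫⁻ z : ℝ × (Fin n → ℝ), f 0 z.1 * ∏ i : Fin n, f i.succ (z.2 i) := by
        rw [volume_pi, ← ((measurePreserving_piFinSuccAbove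
          (fun _ : Fin (n+1) => (volume : Measure ℝ)) 0).symm).lintegral_comp_emb
          (MeasurableEquiv.measurableEmbedding _)]
        congr 1
        ext z
        simp [MeasurableEquiv.piFinSuccAbove_symm_apply, Fin.prod_univ_succ,
          Fin.zero_succAbove]
      rw [step, MeasureTheory.Measure.volume_eq_prod,
        lintegral_prod_mul (μ := volume) (ν := volume) (f := f 0)
          (g := fun v : Fin n → ℝ => ∏ i : Fin n, f i.succ (v i)) (hf 0).aemeasurable
          (Finset.measurable_prod Finset.univ
            (fun i _ => (hf i.succ).comp (measurable_pi_apply i))).aemeasurable,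
        ih (fun i => f i.succ) (fun i => hf i.succ)]
      exact (Fin.prod_univ_succ (fun i => ∫⁻ t, f i t)).symm

theorem lintegral_triple' (f1 f2 f3 : ℝ → ENNReal) (h1 : Measurable f1)
    (h2 : Measurable f2) (h3 : Measurable f3) :
    ∫⁻ x : Fin 3 → ℝ, f1 (x 0) * f2 (x 1) * f3 (x 2)
      = (∫⁻ t, f1 t) * (∫⁻ t, f2 t) * (∫⁻ t, f3 t) := by
  have := lintegral_fin_nat_prod_eq_prod' (n := 3) ![f1, f2, f3]
    (by intro i; fin_cases i <;> simpa)
  simpa [Fin.prod_univ_three] using this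

theorem rpow_aux' (s w q : ℝ) (hs : 0 < s) (hq : 0 < q) (key : q^2 ≤ 2*(1+w^2)) :
    (1 + w ^ 2) ^ (-s) ≤ 2 ^ s * q ^ (-(2*s)) := by
  have hw1 : (0:ℝ) < 1 + w^2 := by positivity
  have step1 : (1 + w ^ 2) ^ (-s) ≤ (q ^ 2 / 2) ^ (-s) :=
    Real.rpow_le_rpow_of_nonpos (by positivity) (by linarith) (by linarith)
  refine step1.trans_eq ?_
  rw [div_eq_mul_inv, Real.mul_rpow (by positivity) (by norm_num),
    Real.inv_rpow (by norm_num : (0:ℝ) ≤ 2), Real.rpow_neg (by norm_num : (0:ℝ) ≤ 2), inv_inv,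
    ← Real.rpow_natCast q 2, ← Real.rpow_mul hq.le]
  norm_num [mul_comm]

theorem measure_change_aux (M : Matrix (Fin 3) (Fin 3) ℝ) (hM : M.det ≠ 0)
    (F : (Fin 3 → ℝ) → ENNReal) (hF : Measurable F) :
    ∫⁻ u : Fin 3 → ℝ, F (M.mulVec u) = ENNReal.ofReal |M.det⁻¹| * ∫⁻ w, F w := by
  have h1 : ∀ u, M.mulVec u = (Matrix.toLin' M) u := by simp [Matrix.toLin'_apply]
  simp_rw [h1]
  rw [← MeasureTheory.lintegral_map hF
      (Matrix.toLin' M).continuous_of_finiteDimensional.measurable,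
    Real.map_linearMap_volume_pi_eq_smul_volume_pi (by simpa using hM),
    lintegral_smul_measure]
  simp

theorem dot_inner_aux (u v : EuclideanSpace ℝ (Fin 3)) :
    (fun i => u i) ⬝ᵥ (fun i => v i) = ⟪u, v⟫ := by
  simp [dotProduct, PiLp.inner_apply, RCLike.inner_apply, starRingEnd_apply, mul_comm]

theorem det_rows_aux (r0 r1 : Fin 3 → ℝ) (t : ℝ) :
    (Matrix.of ![r0, r1, fun i => t * (r0 ⨯₃ r1) i]).det
      = t * ((r0 ⨯₃ r1) ⬝ᵥ (r0 ⨯₃ r1)) := by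
  simp [Matrix.det_fin_three, cross_apply, dotProduct, Fin.sum_univ_three]
  ring

theorem scaled_dot_aux (w : Fin 3 → ℝ) (t : ℝ) :
    (fun i => t * w i) ⬝ᵥ (fun i => t * w i) = t^2 * (w ⬝ᵥ w) := by
  simp [dotProduct, Fin.sum_univ_three]
  ring

theorem mulVec0_aux (r0 r1 r2 u : Fin 3 → ℝ) :
    (Matrix.of ![r0, r1, r2]).mulVec u 0 = r0 ⬝ᵥ u := by
  simp [Matrix.mulVec]

theorem mulVec1_aux (r0 r1 r2 u : Fin 3 → ℝ) :
    (Matrix.of ![r0, r1, r2]).mulVec u 1 = r1 ⬝ᵥ u := by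
  simp [Matrix.mulVec]

theorem mulVec2_aux (r0 r1 r2 u : Fin 3 → ℝ) :
    (Matrix.of ![r0, r1, r2]).mulVec u 2 = r2 ⬝ᵥ u := by
  simp [Matrix.mulVec]


theorem key_aux (m w2 : ℝ) (hm : 0 ≤ m) (h3 : m^2 ≤ w2) : (1+m)^2 ≤ 2*(1+w2) := by
  nlinarith [sq_nonneg (m-1)]

theorem AB_aux (A B c : ℝ) (hA : 0 < A) (hB : 0 < B) (hA2 : A^2 = 2-2*c)
    (hB2 : B^2 = 2+2*c) : 2 ≤ A + B := by
  nlinarith [mul_pos hA hB, hA.le, hB.le]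

theorem keyAB_aux (A B : ℝ) (hA : 0 < A) (hB : 0 < B) (hAB : 2 ≤ A+B) :
    (A*B/2)⁻¹ ≤ 1/A + 1/B := by
  rw [inv_div, div_add_div _ _ hA.ne' hB.ne', div_le_div_iff₀ (mul_pos hA hB) (mul_pos hA hB)]
  nlinarith [mul_pos hA hB]

theorem eq_aux (si e m ny ny' ts i : ℝ) (he : e ≠ 0) (hy : ny ≠ 0) (hy' : ny' ≠ 0) :
    si * (1/e * m * (2*(e/ny)) * (1/e * m * (2*(e/ny'))) * (ts * i))
      = si * (4 * m^2 * ts * i * (1/(ny*ny'))) := by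
  field_simp
  ring

set_option maxHeartbeats 2000000 in
/-- Let `ψ` be a smooth even nonnegative function supported in `[-1,1]` with
`∫ ψ = 1`, `ψ_ε(t) = (1/ε)ψ(t/ε)`, and let `s > 1/2`. Then there exists a constant `C`
(depending on `s` and `ψ`) such that for all nonzero `y, y' ∈ ℝ³` with `ŷ ≠ ±ŷ'`
(`ŷ = y/|y|`), all `p ∈ ℝ³`, and all `ε ∈ (0,1]`,
`∫_{ℝ³} ψ_ε(x·y) ψ_ε(x·y') ⟨x+p⟩^{-2s} dx ≤ C (1/(|y||y'|)) (1/|ŷ-ŷ'| + 1/|ŷ+ŷ'|)`,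
where `⟨x⟩ = (1 + |x|²)^{1/2}`. -/
theorem stmt_13 (ψ : ℝ → ℝ) (hψ_smooth : ContDiff ℝ (⊤ : ℕ∞) ψ) (hψ_nonneg : ∀ t, 0 ≤ ψ t)
    (hψ_even : ∀ t, ψ (-t) = ψ t) (hψ_supp : Function.support ψ ⊆ Set.Icc (-1) 1)
    (hψ_int : ∫ t : ℝ, ψ t = 1) (s : ℝ) (hs : 1 / 2 < s) :
    ∃ C : ℝ, ∀ (y y' : EuclideanSpace ℝ (Fin 3)), y ≠ 0 → y' ≠ 0 →
      ‖y‖⁻¹ • y ≠ ‖y'‖⁻¹ • y' → ‖y‖⁻¹ • y ≠ -(‖y'‖⁻¹ • y') →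
      ∀ (p : EuclideanSpace ℝ (Fin 3)) (ε : ℝ), 0 < ε → ε ≤ 1 →
        (∫⁻ x : EuclideanSpace ℝ (Fin 3),
            ENNReal.ofReal ((1 / ε) * ψ ((inner ℝ x y : ℝ) / ε) *
              ((1 / ε) * ψ ((inner ℝ x y' : ℝ) / ε)) * (1 + ‖x + p‖ ^ 2) ^ (-s)))
          ≤ ENNReal.ofReal (C * (1 / (‖y‖ * ‖y'‖)) *
              (1 / ‖‖y‖⁻¹ • y - ‖y'‖⁻¹ • y'‖ + 1 / ‖‖y‖⁻¹ • y + ‖y'‖⁻¹ • y'‖)) := by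
  classical
  have hψcont := hψ_smooth.continuous
  have hcs : HasCompactSupport ψ :=
    HasCompactSupport.intro isCompact_Icc fun x hx => by
      by_contra h
      exact hx (hψ_supp h)
  obtain ⟨t₀, ht₀⟩ := hψcont.exists_forall_ge_of_hasCompactSupport hcs
  set Mψ := ψ t₀ with hMψdef
  have hM0 : 0 ≤ Mψ := hψ_nonneg t₀
  have hs2 : (1:ℝ) < 2 * s := by linarith
  have hint : Integrable (fun t : ℝ => (1 + |t|) ^ (-(2*s))) := by
    have := integrable_one_add_norm (E := ℝ) (μ := volume) (r := 2*s) (by simpa using hs2)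
    simpa [Real.norm_eq_abs] using this
  set I := ∫ t : ℝ, (1 + |t|) ^ (-(2*s)) with hIdef
  have hI0 : 0 ≤ I := integral_nonneg fun t => by positivity
  have h2s : (0:ℝ) ≤ 2 ^ s := by positivity
  refine ⟨4 * Mψ^2 * 2^s * I, ?_⟩
  intro y y' hy hy' hne hne' p ε hε hε1
  set a := ‖y‖⁻¹ • y with hadef
  set b := ‖y'‖⁻¹ • y' with hbdef
  have hyn : (0:ℝ) < ‖y‖ := norm_pos_iff.mpr hy
  have hy'n : (0:ℝ) < ‖y'‖ := norm_pos_iff.mpr hy'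
  have ha : ‖a‖ = 1 := norm_smul_inv_norm hy
  have hb : ‖b‖ = 1 := norm_smul_inv_norm hy'
  set c := ⟪a, b⟫ with hcdef
  set A := ‖a - b‖ with hAdef
  set B := ‖a + b‖ with hBdef
  have hA : 0 < A := by rw [hAdef, norm_pos_iff]; exact sub_ne_zero.mpr hne
  have hB : 0 < B := by
    rw [hBdef, norm_pos_iff]
    intro h
    exact hne' (eq_neg_of_add_eq_zero_left h)
  have hA2 : A^2 = 2 - 2*c := by
    rw [hAdef, norm_sub_sq_real, ha, hb, hcdef]; ring
  have hB2 : B^2 = 2 + 2*c := by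
    rw [hBdef, norm_add_sq_real, ha, hb, hcdef]; ring
  have hApos2 : (0:ℝ) < 2 - 2*c := hA2 ▸ pow_pos hA 2
  have hBpos2 : (0:ℝ) < 2 + 2*c := hB2 ▸ pow_pos hB 2
  have hc2 : c^2 < 1 := by
    have h := mul_pos (by linarith [hApos2] : (0:ℝ) < 1 - c)
      (by linarith [hBpos2] : (0:ℝ) < 1 + c)
    nlinarith [h]
  set sθ := Real.sqrt (1 - c^2) with hsθdef
  have hsθpos : 0 < sθ := Real.sqrt_pos.mpr (by linarith [hc2])
  have hsθsq : sθ^2 = 1 - c^2 := Real.sq_sqrt (by linarith [hc2])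
  have hsθAB : sθ = A * B / 2 := by
    have h1 : (A*B/2)^2 = 1 - c^2 := by
      have h2 : (A*B/2)^2 = (A^2)*(B^2)/4 := by ring
      rw [h2, hA2, hB2]; ring
    rw [hsθdef, ← h1, Real.sqrt_sq (by positivity)]
  -- normal vector and matrix
  obtain ⟨nn, hnn_def⟩ : ∃ v : Fin 3 → ℝ,
      v = (fun i => a i) ⨯₃ (fun i => b i) := ⟨_, rfl⟩
  have hnn : nn ⬝ᵥ nn = 1 - c^2 := by
    have h1 : (inner ℝ a b : ℝ) = c := hcdef.symm
    have h2 : (inner ℝ b a : ℝ) = c := by rw [real_inner_comm]; try exact hcdef.symm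
    rw [hnn_def, cross_dot_cross]
    simp only [dot_inner_aux, real_inner_self_eq_norm_sq, ha, hb, h1, h2]
    ring
  obtain ⟨nE, hnE_def⟩ : ∃ nE : EuclideanSpace ℝ (Fin 3),
      nE = (fun i => sθ⁻¹ * nn i : Fin 3 → ℝ) := ⟨WithLp.toLp 2 _, rfl⟩
  have hrow : (fun i => nE i) = (fun i => sθ⁻¹ * nn i) := by
    funext i; rw [hnE_def]
  obtain ⟨M, hM_def⟩ : ∃ M : Matrix (Fin 3) (Fin 3) ℝ,
      M = Matrix.of ![fun i => a i, fun i => b i, fun i => nE i] := ⟨_, rfl⟩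
  have hdet : M.det = sθ := by
    rw [hM_def, hrow]
    rw [show (fun i => sθ⁻¹ * nn i) = (fun i => sθ⁻¹ * (((fun i => a i) ⨯₃ (fun i => b i)) i))
        from by rw [← hnn_def]]
    rw [det_rows_aux, ← hnn_def, hnn, ← hsθsq, sq]
    field_simp
  have hdetne : M.det ≠ 0 := by rw [hdet]; exact hsθpos.ne'
  have hdetinv : |M.det⁻¹| = sθ⁻¹ := by rw [hdet, abs_inv, abs_of_pos hsθpos]
  have hnE1 : ⟪nE, nE⟫ = 1 := by
    rw [← dot_inner_aux nE nE, hrow, scaled_dot_aux, hnn, ← hsθsq]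
    field_simp
  have hnEnorm : ‖nE‖ = 1 := by
    have h2 := real_inner_self_eq_norm_sq nE
    rw [hnE1] at h2
    rw [← Real.sqrt_sq (norm_nonneg nE), ← h2, Real.sqrt_one]
  have hCS : ∀ z : EuclideanSpace ℝ (Fin 3), |⟪nE, z⟫| ≤ ‖z‖ := fun z => by
    simpa [hnEnorm] using abs_real_inner_le_norm nE z
  have hmv0 : ∀ x : EuclideanSpace ℝ (Fin 3), M.mulVec (fun j => x j) 0 = ⟪a, x⟫ := fun x => by
    rw [hM_def, mulVec0_aux, dot_inner_aux]
  have hmv1 : ∀ x : EuclideanSpace ℝ (Fin 3), M.mulVec (fun j => x j) 1 = ⟪b, x⟫ := fun x => by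
    rw [hM_def, mulVec1_aux, dot_inner_aux]
  have hmv2 : ∀ x : EuclideanSpace ℝ (Fin 3), M.mulVec (fun j => x j) 2 = ⟪nE, x⟫ := fun x => by
    rw [hM_def, mulVec2_aux, dot_inner_aux]
  -- the dominating product function
  set r1 := ε / ‖y‖ with hr1def
  set r2 := ε / ‖y'‖ with hr2def
  set dd := ⟪nE, p⟫ with hdddef
  set c1 := ENNReal.ofReal (1/ε * Mψ) with hc1def
  set f1 : ℝ → ENNReal := fun t => (Set.Icc (-r1) r1).indicator (fun _ => c1) t with hf1def
  set f2 : ℝ → ENNReal := fun t => (Set.Icc (-r2) r2).indicator (fun _ => c1) t with hf2def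
  set f3 : ℝ → ENNReal := fun t => ENNReal.ofReal (2^s * (1 + |t + dd|) ^ (-(2*s))) with hf3def
  have hf1m : Measurable f1 := Measurable.indicator measurable_const measurableSet_Icc
  have hf2m : Measurable f2 := Measurable.indicator measurable_const measurableSet_Icc
  have hf3m : Measurable f3 := by
    apply ENNReal.measurable_ofReal.comp
    apply Measurable.const_mul
    apply Continuous.measurable
    apply Continuous.rpow_const
    · exact continuous_const.add ((continuous_id.add continuous_const).abs)
    · intro t; left; positivity
  set F : (Fin 3 → ℝ) → ENNReal := fun u => f1 (u 0) * f2 (u 1) * f3 (u 2) with hFdef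
  have hFm : Measurable F :=
    ((hf1m.comp (measurable_pi_apply 0)).mul (hf2m.comp (measurable_pi_apply 1))).mul
      (hf3m.comp (measurable_pi_apply 2))
  -- pointwise bound
  have hpoint : ∀ x : EuclideanSpace ℝ (Fin 3),
      ENNReal.ofReal ((1 / ε) * ψ ((inner ℝ x y : ℝ) / ε) *
          ((1 / ε) * ψ ((inner ℝ x y' : ℝ) / ε)) * (1 + ‖x + p‖ ^ 2) ^ (-s))
        ≤ F (M.mulVec (fun j => x j)) := by
    intro x
    by_cases hz1 : ψ ((inner ℝ x y : ℝ) / ε) = 0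
    · simp only [hz1, mul_zero, zero_mul, ENNReal.ofReal_zero]
      exact zero_le
    by_cases hz2 : ψ ((inner ℝ x y' : ℝ) / ε) = 0
    · simp only [hz2, mul_zero, zero_mul, ENNReal.ofReal_zero]
      exact zero_le
    have hmem1 := hψ_supp (Function.mem_support.mpr hz1)
    have hmem2 := hψ_supp (Function.mem_support.mpr hz2)
    rw [Set.mem_Icc, le_div_iff₀ hε, div_le_iff₀ hε] at hmem1 hmem2
    have h1 : |(inner ℝ x y : ℝ)| ≤ ε := by
      rw [abs_le]; constructor <;> linarith [hmem1.1, hmem1.2]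
    have h2 : |(inner ℝ x y' : ℝ)| ≤ ε := by
      rw [abs_le]; constructor <;> linarith [hmem2.1, hmem2.2]
    have hu0 : M.mulVec (fun j => x j) 0 ∈ Set.Icc (-r1) r1 := by
      rw [hmv0 x, Set.mem_Icc, ← abs_le, hadef, real_inner_smul_left, real_inner_comm,
        abs_mul, abs_inv, abs_norm, hr1def, div_eq_inv_mul]
      exact mul_le_mul_of_nonneg_left h1 (by positivity)
    have hu1 : M.mulVec (fun j => x j) 1 ∈ Set.Icc (-r2) r2 := by
      rw [hmv1 x, Set.mem_Icc, ← abs_le, hbdef, real_inner_smul_left, real_inner_comm,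
        abs_mul, abs_inv, abs_norm, hr2def, div_eq_inv_mul]
      exact mul_le_mul_of_nonneg_left h2 (by positivity)
    have ht : M.mulVec (fun j => x j) 2 + dd = ⟪nE, x + p⟫ := by
      rw [hmv2 x, hdddef, ← inner_add_right]
    have hq : (0:ℝ) < 1 + |⟪nE, x + p⟫| := by positivity
    have hkey : (1 + |⟪nE, x + p⟫|)^2 ≤ 2*(1+‖x+p‖^2) := by
      refine key_aux _ _ (abs_nonneg _) ?_
      have h3 := hCS (x + p)
      exact pow_le_pow_left₀ (abs_nonneg _) h3 2
    have hw : (1+‖x+p‖^2)^(-s) ≤ 2^s * (1+|⟪nE, x + p⟫|)^(-(2*s)) :=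
      rpow_aux' s ‖x+p‖ _ (by linarith) hq hkey
    have hreal : (1 / ε) * ψ ((inner ℝ x y : ℝ) / ε) * ((1 / ε) * ψ ((inner ℝ x y' : ℝ) / ε)) *
        (1 + ‖x + p‖ ^ 2) ^ (-s)
        ≤ (1/ε * Mψ) * (1/ε * Mψ) * (2^s * (1+|⟪nE, x + p⟫|)^(-(2*s))) := by
      have w0 : (0:ℝ) ≤ (1 + ‖x + p‖ ^ 2) ^ (-s) := by positivity
      have hψ1 : ψ ((inner ℝ x y : ℝ) / ε) ≤ Mψ := ht₀ _
      have hψ2 : ψ ((inner ℝ x y' : ℝ) / ε) ≤ Mψ := ht₀ _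
      have he0 : (0:ℝ) ≤ 1/ε := by positivity
      apply mul_le_mul _ hw w0 (by positivity)
      exact mul_le_mul (mul_le_mul_of_nonneg_left hψ1 he0)
        (mul_le_mul_of_nonneg_left hψ2 he0)
        (mul_nonneg he0 (hψ_nonneg _)) (by positivity)
    calc ENNReal.ofReal ((1 / ε) * ψ ((inner ℝ x y : ℝ) / ε) *
            ((1 / ε) * ψ ((inner ℝ x y' : ℝ) / ε)) * (1 + ‖x + p‖ ^ 2) ^ (-s))
        ≤ ENNReal.ofReal ((1/ε * Mψ) * (1/ε * Mψ) * (2^s * (1+|⟪nE, x + p⟫|)^(-(2*s)))) :=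
          ENNReal.ofReal_le_ofReal hreal
      _ = F (M.mulVec (fun j => x j)) := by
          rw [hFdef]
          simp only [hf1def, hf2def, hf3def, Set.indicator_of_mem hu0, Set.indicator_of_mem hu1,
            ht, hc1def]
          rw [ENNReal.ofReal_mul (by positivity), ENNReal.ofReal_mul (by positivity)]
  -- main computation
  have hchain : (∫⁻ x : EuclideanSpace ℝ (Fin 3),
      ENNReal.ofReal ((1 / ε) * ψ ((inner ℝ x y : ℝ) / ε) *
        ((1 / ε) * ψ ((inner ℝ x y' : ℝ) / ε)) * (1 + ‖x + p‖ ^ 2) ^ (-s)))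
      ≤ ENNReal.ofReal |M.det⁻¹| * ((∫⁻ t, f1 t) * (∫⁻ t, f2 t) * (∫⁻ t, f3 t)) := by
    rw [← ((EuclideanSpace.volume_preserving_symm_measurableEquiv_toLp (Fin 3)).symm
        (MeasurableEquiv.toLp 2 (Fin 3 → ℝ)).symm).lintegral_comp_emb
        (MeasurableEquiv.measurableEmbedding _)]
    rw [← lintegral_triple' f1 f2 f3 hf1m hf2m hf3m, ← measure_change_aux M hdetne F hFm]
    exact lintegral_mono fun u => hpoint _
  refine hchain.trans ?_
  -- compute the three 1D integrals
  have hif1 : ∫⁻ t, f1 t = c1 * ENNReal.ofReal (2*r1) := by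
    rw [hf1def]
    rw [lintegral_indicator_const measurableSet_Icc, Real.volume_Icc,
      show r1 - -r1 = 2*r1 by ring]
  have hif2 : ∫⁻ t, f2 t = c1 * ENNReal.ofReal (2*r2) := by
    rw [hf2def]
    rw [lintegral_indicator_const measurableSet_Icc, Real.volume_Icc,
      show r2 - -r2 = 2*r2 by ring]
  have hif3 : ∫⁻ t, f3 t = ENNReal.ofReal (2^s) * ENNReal.ofReal I := by
    rw [hf3def]
    simp_rw [ENNReal.ofReal_mul h2s]
    rw [lintegral_const_mul' _ _ ENNReal.ofReal_ne_top]
    congr 1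
    rw [lintegral_add_right_eq_self (μ := volume)
        (fun t : ℝ => ENNReal.ofReal ((1+|t|)^(-(2*s)))) dd,
      ← MeasureTheory.ofReal_integral_eq_lintegral_ofReal hint
        (ae_of_all _ fun t => by positivity), hIdef]
  have hr1nn : (0:ℝ) ≤ 2*r1 := by rw [hr1def]; positivity
  have hr2nn : (0:ℝ) ≤ 2*r2 := by rw [hr2def]; positivity
  have n1 : (0:ℝ) ≤ 1/ε * Mψ := mul_nonneg (by positivity) hM0
  have n2 : (0:ℝ) ≤ 1/ε * Mψ * (2*r1) := mul_nonneg n1 hr1nn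
  have n3 : (0:ℝ) ≤ 1/ε * Mψ * (2*r2) := mul_nonneg n1 hr2nn
  have e1 : ENNReal.ofReal (1/ε*Mψ) * ENNReal.ofReal (2*r1)
      = ENNReal.ofReal (1/ε*Mψ*(2*r1)) := (ENNReal.ofReal_mul n1).symm
  have e2 : ENNReal.ofReal (1/ε*Mψ) * ENNReal.ofReal (2*r2)
      = ENNReal.ofReal (1/ε*Mψ*(2*r2)) := (ENNReal.ofReal_mul n1).symm
  have e3 : ENNReal.ofReal ((2:ℝ)^s) * ENNReal.ofReal I
      = ENNReal.ofReal (2^s * I) := (ENNReal.ofReal_mul h2s).symm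
  have e4 : ENNReal.ofReal (1/ε*Mψ*(2*r1)) * ENNReal.ofReal (1/ε*Mψ*(2*r2))
      = ENNReal.ofReal (1/ε*Mψ*(2*r1) * (1/ε*Mψ*(2*r2))) := (ENNReal.ofReal_mul n2).symm
  have e5 : ENNReal.ofReal (1/ε*Mψ*(2*r1) * (1/ε*Mψ*(2*r2))) * ENNReal.ofReal (2^s * I)
      = ENNReal.ofReal (1/ε*Mψ*(2*r1) * (1/ε*Mψ*(2*r2)) * (2^s * I)) :=
    (ENNReal.ofReal_mul (mul_nonneg n2 n3)).symm
  have e6 : ENNReal.ofReal sθ⁻¹ *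
        ENNReal.ofReal (1/ε*Mψ*(2*r1) * (1/ε*Mψ*(2*r2)) * (2^s * I))
      = ENNReal.ofReal (sθ⁻¹ * (1/ε*Mψ*(2*r1) * (1/ε*Mψ*(2*r2)) * (2^s * I))) :=
    (ENNReal.ofReal_mul (inv_nonneg.mpr hsθpos.le)).symm
  rw [hif1, hif2, hif3, hdetinv, hc1def, e1, e2, e4, e3, e5, e6]
  apply ENNReal.ofReal_le_ofReal
  -- final real arithmetic
  have hkeyAB : sθ⁻¹ ≤ 1/A + 1/B := by
    rw [hsθAB]
    exact keyAB_aux A B hA hB (AB_aux A B c hA hB hA2 hB2)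
  have hEq : sθ⁻¹ * (1/ε * Mψ * (2*r1) * (1/ε * Mψ * (2*r2)) * (2^s * I))
      = sθ⁻¹ * (4 * Mψ^2 * 2^s * I * (1/(‖y‖*‖y'‖))) := by
    rw [hr1def, hr2def]
    exact eq_aux _ _ _ _ _ _ _ hε.ne' hyn.ne' hy'n.ne'
  rw [hEq]
  calc sθ⁻¹ * (4 * Mψ^2 * 2^s * I * (1/(‖y‖*‖y'‖)))
      ≤ (1/A + 1/B) * (4 * Mψ^2 * 2^s * I * (1/(‖y‖*‖y'‖))) :=
        mul_le_mul_of_nonneg_right hkeyAB (by positivity)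
    _ = 4 * Mψ^2 * 2^s * I * (1/(‖y‖*‖y'‖)) * (1/A + 1/B) := by ring
end
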